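/- Let (S, M, ⊨) and (S', M', ⊨') be satisfaction systems, and suppose α : S → S' and β : M' → M satisfy the compatibility condition: for all m' ∈ M' and φ ∈ S, m' ⊨' α(φ) iff β(m') ⊨ φ. Then for every Γ ⊆ S and every φ ∈ S, if φ belongs to the double-polar closure of Γ (with respect to ⊨), then α(φ) belongs to the double-polar closure of α[Γ] (with respect to ⊨'). -/

import Mathlib

def modelPolar {S M : Type*} (sat : M → S → Prop) (Γ : Set S) : Set M :=
  {m | ∀ φ ∈ Γ, sat m φ}

def sentencePolar {S M : Type*} (sat : M → S → Prop) (N : Set M) : Set S :=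
  {φ | ∀ m ∈ N, sat m φ}

def doublePolar {S M : Type*} (sat : M → S → Prop) (Γ : Set S) : Set S :=
  sentencePolar sat (modelPolar sat Γ)

theorem sentencePolar_anti {S M : Type*} (sat : M → S → Prop) {N N' : Set M} (h : N ⊆ N') :
    sentencePolar sat N' ⊆ sentencePolar sat N :=
  fun _ hφ m hm => hφ m (h hm)

section Comorphism

variable {S M S' M' : Type*} {sat : M → S → Prop} {sat' : M' → S' → Prop}
  {α : S → S'} {β : M' → M}

theorem modelPolar_image (compat : ∀ m' φ, sat' m' (α φ) ↔ sat (β m') φ) (Γ : Set S) :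
    modelPolar sat' (α '' Γ) = β ⁻¹' modelPolar sat Γ := by
  ext m'
  simp only [modelPolar, Set.mem_ofPred_eq, Set.mem_preimage, Set.forall_mem_image, compat]

theorem preimage_sentencePolar (compat : ∀ m' φ, sat' m' (α φ) ↔ sat (β m') φ) (N : Set M') :
    α ⁻¹' sentencePolar sat' N = sentencePolar sat (β '' N) := by
  ext φ
  simp only [sentencePolar, Set.mem_ofPred_eq, Set.mem_preimage, Set.forall_mem_image, compat]

end Comorphism

/-- Comorphism (α : S → S', β : M' → M) compatibility implies preservation of the
double polar closure: φ ∈ C(Γ) ⟹ α(φ) ∈ C'(α[Γ]). -/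
theorem comorphism_preserves_doublePolar {S M S' M' : Type*}
    (sat : M → S → Prop) (sat' : M' → S' → Prop)
    (α : S → S') (β : M' → M)
    (compat : ∀ (m' : M') (φ : S), sat' m' (α φ) ↔ sat (β m') φ) :
    ∀ (Γ : Set S) (φ : S), φ ∈ doublePolar sat Γ →
      α φ ∈ doublePolar sat' (α '' Γ) := by
  intro Γ φ hφ
  have hφ' : φ ∈ sentencePolar sat (β '' (β ⁻¹' modelPolar sat Γ)) :=
    sentencePolar_anti sat (Set.image_preimage_subset β _) hφ
  rw [doublePolar, modelPolar_image compat]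
  rwa [← preimage_sentencePolar compat] at hφ'
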